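/- arXiv:1909.03492 — 3 statements merged into one kernel-verified Lean document; each statement's English description precedes it below -/
import Mathlib

section
/- Let T : C → C be k-strictly pseudocontractive with Fix(T) ≠ ∅, and let {α_n} ⊆ (k, 1) satisfy Σ_{n}(α_n − k)(1 − α_n) = ∞. Then the Mann iteration x_{n+1} = α_n x_n + (1 − α_n) T x_n satisfies liminf_{n→∞} ‖x_n − T x_n‖ = 0. -/
/-!
Fix `p ∈ Fix(T)`. Strict pseudocontractivity at `(xₙ, p)` together with the identity
`‖t a + (1 - t) b‖² = t‖a‖² + (1 - t)‖b‖² - t(1 - t)‖a - b‖²` makes the Mann iteration Fejér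
monotone with a quantified gain,
`‖xₙ₊₁ - p‖² ≤ ‖xₙ - p‖² - (αₙ - k)(1 - αₙ)‖xₙ - T xₙ‖²`.
Telescoping bounds `∑ (αₙ - k)(1 - αₙ)‖xₙ - T xₙ‖²` by `‖x₀ - p‖²`; since the weights are not
summable, the residuals cannot stay above any `ε > 0`.
-/

open Filter Finset

theorem Finset.sum_range_le_of_le_sub {d e : ℕ → ℝ} (hd : ∀ n, 0 ≤ d n)
    (h : ∀ n, e n ≤ d n - d (n + 1)) (N : ℕ) :
    ∑ n ∈ range N, e n ≤ d 0 :=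
  calc ∑ n ∈ range N, e n ≤ ∑ n ∈ range N, (d n - d (n + 1)) := sum_le_sum fun n _ => h n
    _ = d 0 - d N := sum_range_sub' d N
    _ ≤ d 0 := sub_le_self _ (hd N)

theorem frequently_lt_of_tendsto_sum_atTop_of_sum_mul_le {c a : ℕ → ℝ} {B : ℝ}
    (hc : ∀ n, 0 ≤ c n) (hdiv : Tendsto (fun N => ∑ n ∈ range N, c n) atTop atTop)
    (hB : ∀ N, ∑ n ∈ range N, c n * a n ≤ B) {ε : ℝ} (hε : 0 < ε) :
    ∃ᶠ n in atTop, a n < ε := by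
  by_contra h
  obtain ⟨n₀, hn₀⟩ := eventually_atTop.mp (not_frequently.mp h)
  set K := ∑ n ∈ range n₀, c n * (a n - ε)
  have hbounded : ∀ N ≥ n₀, ε * ∑ n ∈ range N, c n + K ≤ B := by
    intro N hN
    have hK : K ≤ ∑ n ∈ range N, c n * (a n - ε) :=
      sum_le_sum_of_subset_of_nonneg (range_subset_range.2 hN) fun n _ hn =>
        mul_nonneg (hc n) (sub_nonneg.2 (not_lt.1 (hn₀ n (by simpa using hn))))
    have hsplit : ∑ n ∈ range N, c n * (a n - ε)
        = ∑ n ∈ range N, c n * a n - ε * ∑ n ∈ range N, c n := by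
      rw [mul_sum, ← sum_sub_distrib]
      exact sum_congr rfl fun n _ => by ring
    linarith [hB N]
  have hunbounded := tendsto_atTop_add_const_right atTop K (hdiv.const_mul_atTop hε)
  obtain ⟨N, hNB, hN⟩ :=
    ((hunbounded.eventually_gt_atTop B).and (eventually_ge_atTop n₀)).exists
  exact (hbounded N hN).not_gt hNB

theorem liminf_eq_zero_of_nonneg_of_frequently_lt {ι : Type*} {l : Filter ι} {u : ι → ℝ}
    (h0 : ∀ i, 0 ≤ u i) (h : ∀ ε > 0, ∃ᶠ i in l, u i < ε) :
    liminf u l = 0 := by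
  have hcobdd : IsCoboundedUnder (· ≥ ·) l u :=
    IsCoboundedUnder.of_frequently_le ((h 1 one_pos).mono fun _ hi => hi.le)
  refine le_antisymm (le_of_forall_pos_le_add fun ε hε => ?_)
    (le_liminf_of_le hcobdd (Eventually.of_forall h0))
  rw [zero_add]
  exact liminf_le_of_frequently_le ((h ε hε).mono fun _ hi => hi.le) (isBoundedUnder_of ⟨0, h0⟩)

section InnerProductSpace

variable {H : Type*} [NormedAddCommGroup H] [InnerProductSpace ℝ H]

open RealInnerProductSpace in
theorem norm_smul_add_one_sub_smul_sq (t : ℝ) (a b : H) :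
    ‖t • a + (1 - t) • b‖ ^ 2
      = t * ‖a‖ ^ 2 + (1 - t) * ‖b‖ ^ 2 - t * (1 - t) * ‖a - b‖ ^ 2 := by
  simp only [← real_inner_self_eq_norm_sq, inner_add_left, inner_add_right, inner_sub_left,
    inner_sub_right, real_inner_smul_left, real_inner_smul_right, real_inner_comm a b]
  ring

theorem norm_smul_add_one_sub_smul_sq_le {a b : H} {k t : ℝ}
    (hab : ‖b‖ ^ 2 ≤ ‖a‖ ^ 2 + k * ‖a - b‖ ^ 2) (ht : t ≤ 1) :
    ‖t • a + (1 - t) • b‖ ^ 2 ≤ ‖a‖ ^ 2 - (t - k) * (1 - t) * ‖a - b‖ ^ 2 := by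
  rw [norm_smul_add_one_sub_smul_sq]
  nlinarith [mul_le_mul_of_nonneg_left hab (sub_nonneg.2 ht)]

theorem norm_mann_step_sub_fixedPoint_sq_le {T : H → H} {y p : H} {k t : ℝ}
    (hspc : ‖T y - T p‖ ^ 2 ≤ ‖y - p‖ ^ 2 + k * ‖y - p - (T y - T p)‖ ^ 2)
    (hp : T p = p) (ht : t ≤ 1) :
    ‖t • y + (1 - t) • T y - p‖ ^ 2 ≤ ‖y - p‖ ^ 2 - (t - k) * (1 - t) * ‖y - T y‖ ^ 2 := by
  have hstep : t • y + (1 - t) • T y - p = t • (y - p) + (1 - t) • (T y - p) := by module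
  have hres : y - p - (T y - p) = y - T y := by abel
  rw [hp] at hspc
  rw [hstep, ← hres]
  exact norm_smul_add_one_sub_smul_sq_le hspc ht

end InnerProductSpace

theorem Convex.mann_iterate_mem {E : Type*} [AddCommGroup E] [Module ℝ E] {C : Set E}
    (hC : Convex ℝ C) {T : E → E} (hT : Set.MapsTo T C C) {α : ℕ → ℝ}
    (hα : ∀ n, α n ∈ Set.Icc (0 : ℝ) 1) {x : ℕ → E} (hx0 : x 0 ∈ C)
    (hit : ∀ n, x (n + 1) = α n • x n + (1 - α n) • T (x n)) (n : ℕ) :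
    x n ∈ C := by
  induction n with
  | zero => exact hx0
  | succ n ih =>
    rw [hit n]
    exact hC ih (hT ih) (hα n).1 (sub_nonneg.2 (hα n).2) (add_sub_cancel _ _)

theorem mann_liminf_residual_zero_general
    {H : Type*} [NormedAddCommGroup H] [InnerProductSpace ℝ H]
    (C : Set H) (hC : Convex ℝ C)
    (T : H → H) (hT : Set.MapsTo T C C)
    (k : ℝ) (hk0 : 0 ≤ k)
    (hspc : ∀ x ∈ C, ∀ y ∈ C,
      ‖T x - T y‖ ^ 2 ≤ ‖x - y‖ ^ 2 + k * ‖x - y - (T x - T y)‖ ^ 2)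
    (hfix : ∃ p ∈ C, T p = p)
    (α : ℕ → ℝ) (hα : ∀ n, k < α n ∧ α n < 1)
    (hdiv : Tendsto (fun N => ∑ n ∈ Finset.range N, (α n - k) * (1 - α n)) atTop atTop)
    (x : ℕ → H) (hx0 : x 0 ∈ C)
    (hit : ∀ n, x (n + 1) = α n • x n + (1 - α n) • T (x n)) :
    Filter.liminf (fun n => ‖x n - T (x n)‖) atTop = 0 := by
  obtain ⟨p, hpC, hp⟩ := hfix
  have hmem := hC.mann_iterate_mem hT (fun n => ⟨hk0.trans (hα n).1.le, (hα n).2.le⟩) hx0 hit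
  have hweight : ∀ n, 0 ≤ (α n - k) * (1 - α n) := fun n =>
    mul_nonneg (sub_nonneg.2 (hα n).1.le) (sub_nonneg.2 (hα n).2.le)
  have hdescent : ∀ n, (α n - k) * (1 - α n) * ‖x n - T (x n)‖ ^ 2
      ≤ ‖x n - p‖ ^ 2 - ‖x (n + 1) - p‖ ^ 2 := fun n => by
    have := norm_mann_step_sub_fixedPoint_sq_le (hspc _ (hmem n) p hpC) hp (hα n).2.le
    rw [hit n]
    linarith
  have hsum := sum_range_le_of_le_sub (fun n => sq_nonneg ‖x n - p‖) hdescent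
  refine liminf_eq_zero_of_nonneg_of_frequently_lt (fun n => norm_nonneg _) fun ε hε => ?_
  exact (frequently_lt_of_tendsto_sum_atTop_of_sum_mul_le hweight hdiv hsum (pow_pos hε 2)).mono
    fun n hn => lt_of_pow_lt_pow_left₀ 2 hε.le hn

theorem mann_liminf_residual_zero
    {H : Type*} [NormedAddCommGroup H] [InnerProductSpace ℝ H] [CompleteSpace H]
    (C : Set H) (hCc : IsClosed C) (hC : Convex ℝ C)
    (T : H → H) (hT : Set.MapsTo T C C)
    (k : ℝ) (hk0 : 0 ≤ k) (hk1 : k < 1)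
    (hspc : ∀ x ∈ C, ∀ y ∈ C,
      ‖T x - T y‖ ^ 2 ≤ ‖x - y‖ ^ 2 + k * ‖x - y - (T x - T y)‖ ^ 2)
    (hfix : ∃ p ∈ C, T p = p)
    (α : ℕ → ℝ) (hα : ∀ n, k < α n ∧ α n < 1)
    (hdiv : Tendsto (fun N => ∑ n ∈ Finset.range N, (α n - k) * (1 - α n)) atTop atTop)
    (x : ℕ → H) (hx0 : x 0 ∈ C)
    (hit : ∀ n, x (n + 1) = α n • x n + (1 - α n) • T (x n)) :
    Filter.liminf (fun n => ‖x n - T (x n)‖) atTop = 0 :=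
  mann_liminf_residual_zero_general C hC T hT k hk0 hspc hfix α hα hdiv x hx0 hit
end

section
/- Let T : C → C be k-strictly pseudocontractive with Fix(T) ≠ ∅, and let {α_n} ⊆ (k, 1) satisfy Σ_n (α_n − k)(1 − α_n) = ∞. Then the Mann iteration x_{n+1} = α_n x_n + (1 − α_n) T x_n converges weakly to a fixed point of T. -/
/-!
The averaged map `S = k • id + (1 - k) • T` is nonexpansive on `C` and has the same fixed points
as `T`; the Mann iteration of `T` is the Krasnoselskii–Mann iteration
`x (n + 1) = (1 - β n) • x n + β n • S (x n)` with `β n = (1 - α n) / (1 - k)`, and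
`β n * (1 - β n) = (α n - k) * (1 - α n) / (1 - k) ^ 2`. At a fixed point `p` each step lowers
`‖x n - p‖ ^ 2` by at least `β n * (1 - β n) * ‖x n - S (x n)‖ ^ 2`, so the distances to fixed
points converge, and since `‖x n - S (x n)‖` is nonincreasing, the divergence of
`∑ β n * (1 - β n)` forces `‖x n - S (x n)‖ → 0`. Weak cluster points exist (Banach–Alaoglu),
lie in `C` (closed convex sets are weakly closed) and are fixed by `S` (demiclosedness), and
Opial's argument shows that there is only one.
-/

open Filter Set
open scoped RealInnerProductSpace Topology

section

variable {H : Type*} [NormedAddCommGroup H] [InnerProductSpace ℝ H]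

def WeakTendsto {ι : Type*} (x : ι → H) (l : Filter ι) (q : H) : Prop :=
  ∀ w : H, Tendsto (fun i => ⟪x i, w⟫) l (𝓝 ⟪q, w⟫)

-- Banach–Alaoglu in `WeakDual ℝ H`, transported back to `H` by the Riesz isomorphism.
theorem exists_weakTendsto_of_isBounded [CompleteSpace H] {ι : Type*} (U : Ultrafilter ι)
    {x : ι → H} (hx : Bornology.IsBounded (range x)) : ∃ q, WeakTendsto x U q := by
  obtain ⟨M, hM⟩ := isBounded_iff_forall_norm_le.1 hx
  let y : ι → WeakDual ℝ H := fun i => StrongDual.toWeakDual (InnerProductSpace.toDual ℝ H (x i))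
  have hyM : ∀ i, y i ∈ WeakDual.toStrongDual ⁻¹' Metric.closedBall 0 M := fun i => by
    simpa [y] using hM _ (mem_range_self i)
  obtain ⟨φ, -, hφ⟩ := (WeakDual.isCompact_closedBall 0 M).ultrafilter_le_nhds (U.map y)
    (by rw [le_principal_iff, Ultrafilter.coe_map, mem_map]; exact univ_mem' hyM)
  refine ⟨(InnerProductSpace.toDual ℝ H).symm (WeakDual.toStrongDual φ), fun w => ?_⟩
  rw [InnerProductSpace.toDual_symm_apply]
  exact ((WeakDual.eval_continuous w).tendsto φ).comp hφ

-- The projection `v` of `q` onto `C` has `⟪q - v, c - v⟫ ≤ 0` for `c ∈ C`; pass to the limit.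
theorem IsClosed.mem_of_weakTendsto [CompleteSpace H] {C : Set H} (hCc : IsClosed C)
    (hC : Convex ℝ C) {ι : Type*} {l : Filter ι} [l.NeBot] {x : ι → H} {q : H}
    (hxC : ∀ᶠ i in l, x i ∈ C) (hq : WeakTendsto x l q) : q ∈ C := by
  obtain ⟨i₀, hi₀⟩ := hxC.exists
  obtain ⟨v, hvC, hv⟩ := exists_norm_eq_iInf_of_complete_convex ⟨_, hi₀⟩ hCc.isComplete hC q
  have hobtuse := (norm_eq_iInf_iff_real_inner_le_zero hC hvC).1 hv
  have hlim : Tendsto (fun i => ⟪x i - v, q - v⟫) l (𝓝 ⟪q - v, q - v⟫) := by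
    simpa only [inner_sub_left] using (hq (q - v)).sub_const ⟪v, q - v⟫
  have hle : ⟪q - v, q - v⟫ ≤ 0 :=
    le_of_tendsto hlim (hxC.mono fun i hi => by rw [real_inner_comm]; exact hobtuse _ hi)
  rwa [sub_eq_zero.1 (real_inner_self_nonpos.1 hle)]

-- Browder's demiclosedness principle.
theorem LipschitzOnWith.eq_of_weakTendsto {C : Set H} {S : H → H} (hS : LipschitzOnWith 1 S C)
    {ι : Type*} {l : Filter ι} [l.NeBot] {x : ι → H} {q : H} (hxC : ∀ᶠ i in l, x i ∈ C)
    (hx : Bornology.IsBounded (range x)) (hd : Tendsto (fun i => ‖x i - S (x i)‖) l (𝓝 0))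
    (hq : WeakTendsto x l q) (hqC : q ∈ C) : S q = q := by
  obtain ⟨M, hM⟩ := isBounded_iff_forall_norm_le.1 hx
  set u := q - S q
  have hbound : ∀ i, ‖x i - q‖ ≤ M + ‖q‖ := fun i =>
    (_root_.norm_sub_le _ _).trans (by linarith [hM _ (mem_range_self i)])
  have hgap : ∀ i, x i ∈ C →
      2 * ⟪x i - q, u⟫ + ‖u‖ ^ 2 ≤ ‖x i - S (x i)‖ ^ 2 + 2 * ‖x i - S (x i)‖ * (M + ‖q‖) := by
    intro i hi
    have htri : ‖x i - S q‖ ≤ ‖x i - S (x i)‖ + ‖x i - q‖ :=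
      calc ‖x i - S q‖ ≤ ‖x i - S (x i)‖ + ‖S (x i) - S q‖ :=
            norm_sub_le_norm_sub_add_norm_sub _ _ _
        _ ≤ ‖x i - S (x i)‖ + ‖x i - q‖ := by simpa using hS.norm_sub_le hi hqC
    have hexp : ‖x i - S q‖ ^ 2 = ‖x i - q‖ ^ 2 + 2 * ⟪x i - q, u⟫ + ‖u‖ ^ 2 := by
      rw [← norm_add_sq_real, sub_add_sub_cancel]
    nlinarith [norm_nonneg (x i - S q), norm_nonneg (x i - S (x i)), hbound i]
  have hlhs : Tendsto (fun i => 2 * ⟪x i - q, u⟫ + ‖u‖ ^ 2) l (𝓝 (‖u‖ ^ 2)) := by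
    have h0 : Tendsto (fun i => ⟪x i - q, u⟫) l (𝓝 0) := by
      simpa only [inner_sub_left, sub_self] using (hq u).sub_const ⟪q, u⟫
    simpa using (h0.const_mul 2).add_const (‖u‖ ^ 2)
  have hrhs : Tendsto (fun i => ‖x i - S (x i)‖ ^ 2 + 2 * ‖x i - S (x i)‖ * (M + ‖q‖)) l
      (𝓝 0) := by
    simpa using (hd.pow 2).add ((hd.const_mul 2).mul_const (M + ‖q‖))
  have hu : ‖u‖ ^ 2 ≤ 0 := le_of_tendsto_of_tendsto hlhs hrhs (hxC.mono hgap)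
  have hu0 : u = 0 := norm_eq_zero.1 (pow_eq_zero_iff two_ne_zero |>.1 (le_antisymm hu (sq_nonneg _)))
  exact (sub_eq_zero.1 hu0).symm

theorem eq_of_weakTendsto_of_tendsto_norm_sub {ι : Type*} {l l₁ l₂ : Filter ι} [l₁.NeBot]
    [l₂.NeBot] (h₁ : l₁ ≤ l) (h₂ : l₂ ≤ l) {x : ι → H} {q q' : H} {L L' : ℝ}
    (hL : Tendsto (fun i => ‖x i - q‖) l (𝓝 L)) (hL' : Tendsto (fun i => ‖x i - q'‖) l (𝓝 L'))
    (hq : WeakTendsto x l₁ q) (hq' : WeakTendsto x l₂ q') : q = q' := by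
  have hpolar : ∀ i, 2 * ⟪x i, q - q'⟫ = ‖x i - q'‖ ^ 2 - ‖x i - q‖ ^ 2 + ‖q‖ ^ 2 - ‖q'‖ ^ 2 := by
    intro i; rw [norm_sub_sq_real, norm_sub_sq_real, inner_sub_right]; ring
  have hlim : Tendsto (fun i => 2 * ⟪x i, q - q'⟫) l (𝓝 (L' ^ 2 - L ^ 2 + ‖q‖ ^ 2 - ‖q'‖ ^ 2)) := by
    simpa only [hpolar] using (((hL'.pow 2).sub (hL.pow 2)).add_const _).sub_const _
  have e₁ := tendsto_nhds_unique ((hq _).const_mul 2) (hlim.mono_left h₁)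
  have e₂ := tendsto_nhds_unique ((hq' _).const_mul 2) (hlim.mono_left h₂)
  have hle : ⟪q - q', q - q'⟫ ≤ 0 := by rw [inner_sub_left]; linarith
  exact sub_eq_zero.1 (real_inner_self_nonpos.1 hle)

theorem exists_weakTendsto_of_tendsto_norm_sub [CompleteSpace H] {ι : Type*} {l : Filter ι}
    [l.NeBot] {x : ι → H} {F : Set H} (hx : Bornology.IsBounded (range x))
    (hF : ∀ p ∈ F, ∃ L, Tendsto (fun i => ‖x i - p‖) l (𝓝 L))
    (hclus : ∀ (U : Ultrafilter ι) (q : H), ↑U ≤ l → WeakTendsto x U q → q ∈ F) :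
    ∃ q ∈ F, WeakTendsto x l q := by
  have hlim : ∀ U : Ultrafilter ι, ↑U ≤ l → ∃ q ∈ F, WeakTendsto x U q := fun U hU =>
    (exists_weakTendsto_of_isBounded U hx).imp fun q hq => ⟨hclus U q hU hq, hq⟩
  obtain ⟨q, hqF, hq⟩ := hlim _ (Ultrafilter.of_le l)
  refine ⟨q, hqF, fun w => (tendsto_iff_ultrafilter _ _ _).2 fun V hV => ?_⟩
  obtain ⟨q', hq'F, hq'⟩ := hlim V hV
  obtain ⟨L, hL⟩ := hF q hqF
  obtain ⟨L', hL'⟩ := hF q' hq'F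
  rw [eq_of_weakTendsto_of_tendsto_norm_sub (Ultrafilter.of_le l) hV hL hL' hq hq']
  exact hq' w

theorem tendsto_zero_of_antitone_of_sum_mul_le {c e : ℕ → ℝ} {B : ℝ} (he : Antitone e)
    (he0 : ∀ n, 0 ≤ e n) (hc0 : ∀ n, 0 ≤ c n)
    (hc : Tendsto (fun N => ∑ n ∈ Finset.range N, c n) atTop atTop)
    (hB : ∀ N, ∑ n ∈ Finset.range N, c n * e n ≤ B) : Tendsto e atTop (𝓝 0) := by
  refine tendsto_order.2 ⟨fun a ha => Eventually.of_forall fun n => ha.trans_le (he0 n),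
    fun ε hε => ?_⟩
  obtain ⟨N, hN⟩ : ∃ N, e N < ε := by
    by_contra! hge
    obtain ⟨N, hN⟩ := ((hc.const_mul_atTop hε).eventually_gt_atTop B).exists
    refine (hB N).not_gt (hN.trans_le ?_)
    rw [Finset.mul_sum]
    exact Finset.sum_le_sum fun n _ => by nlinarith [hge n, hc0 n]
  exact eventually_atTop.2 ⟨N, fun n hn => (he hn).trans_lt hN⟩

theorem norm_one_sub_smul_add_smul_sq (a b : H) (t : ℝ) :
    ‖(1 - t) • a + t • b‖ ^ 2
      = (1 - t) * ‖a‖ ^ 2 + t * ‖b‖ ^ 2 - t * (1 - t) * ‖a - b‖ ^ 2 := by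
  simp only [← real_inner_self_eq_norm_sq, inner_add_left, inner_add_right, inner_sub_left,
    inner_sub_right, real_inner_smul_left, real_inner_smul_right, real_inner_comm a b]
  ring

theorem lipschitzOnWith_one_averaged_of_strictPseudocontractive {C : Set H} {T : H → H} {k : ℝ}
    (hk : k ≤ 1)
    (hT : ∀ x ∈ C, ∀ y ∈ C, ‖T x - T y‖ ^ 2 ≤ ‖x - y‖ ^ 2 + k * ‖x - y - (T x - T y)‖ ^ 2) :
    LipschitzOnWith 1 (fun y => k • y + (1 - k) • T y) C := by
  refine lipschitzOnWith_iff_norm_sub_le.2 fun y hy z hz => ?_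
  have hcomb : k • y + (1 - k) • T y - (k • z + (1 - k) • T z)
      = (1 - (1 - k)) • (y - z) + (1 - k) • (T y - T z) := by module
  have hsq : ‖k • y + (1 - k) • T y - (k • z + (1 - k) • T z)‖ ^ 2 ≤ ‖y - z‖ ^ 2 := by
    rw [hcomb, norm_one_sub_smul_add_smul_sq]
    nlinarith [mul_le_mul_of_nonneg_left (hT y hy z hz) (sub_nonneg.2 hk)]
  simpa using pow_le_pow_iff_left₀ (norm_nonneg _) (norm_nonneg _) two_ne_zero |>.1 hsq

def IsKrasnoselskiiMannSeq (S : H → H) (β : ℕ → ℝ) (x : ℕ → H) : Prop :=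
  ∀ n, x (n + 1) = (1 - β n) • x n + β n • S (x n)

namespace IsKrasnoselskiiMannSeq

variable {C : Set H} {S : H → H} {β : ℕ → ℝ} {x : ℕ → H}

theorem norm_sub_sq_succ_le (hx : IsKrasnoselskiiMannSeq S β x) (hS : LipschitzOnWith 1 S C)
    (hxC : ∀ n, x n ∈ C) (hβ : ∀ n, β n ∈ Icc (0 : ℝ) 1) {p : H} (hpC : p ∈ C) (hp : S p = p)
    (n : ℕ) :
    ‖x (n + 1) - p‖ ^ 2 ≤ ‖x n - p‖ ^ 2 - β n * (1 - β n) * ‖x n - S (x n)‖ ^ 2 := by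
  have hS' : ‖S (x n) - p‖ ≤ ‖x n - p‖ := by simpa [hp] using hS.norm_sub_le (hxC n) hpC
  have hcomb : x (n + 1) - p = (1 - β n) • (x n - p) + β n • (S (x n) - p) := by
    rw [hx n]; module
  rw [hcomb, norm_one_sub_smul_add_smul_sq, sub_sub_sub_cancel_right]
  obtain ⟨hβ0, hβ1⟩ := hβ n
  nlinarith [mul_le_mul_of_nonneg_left (pow_le_pow_left₀ (norm_nonneg _) hS' 2) hβ0]

theorem antitone_norm_sub (hx : IsKrasnoselskiiMannSeq S β x) (hS : LipschitzOnWith 1 S C)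
    (hxC : ∀ n, x n ∈ C) (hβ : ∀ n, β n ∈ Icc (0 : ℝ) 1) {p : H} (hpC : p ∈ C) (hp : S p = p) :
    Antitone fun n => ‖x n - p‖ := by
  refine antitone_nat_of_succ_le fun n => ?_
  have hdec := hx.norm_sub_sq_succ_le hS hxC hβ hpC hp n
  have hnonneg : 0 ≤ β n * (1 - β n) * ‖x n - S (x n)‖ ^ 2 :=
    mul_nonneg (mul_nonneg (hβ n).1 (sub_nonneg.2 (hβ n).2)) (sq_nonneg _)
  exact (pow_le_pow_iff_left₀ (norm_nonneg _) (norm_nonneg _) two_ne_zero).1 (by linarith)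

theorem antitone_norm_sub_map (hx : IsKrasnoselskiiMannSeq S β x) (hS : LipschitzOnWith 1 S C)
    (hxC : ∀ n, x n ∈ C) (hβ : ∀ n, β n ∈ Icc (0 : ℝ) 1) :
    Antitone fun n => ‖x n - S (x n)‖ := by
  refine antitone_nat_of_succ_le fun n => ?_
  obtain ⟨hβ0, hβ1⟩ := hβ n
  have hstep : x (n + 1) - x n = β n • (S (x n) - x n) := by rw [hx n]; module
  have hrest : x (n + 1) - S (x n) = (1 - β n) • (x n - S (x n)) := by rw [hx n]; module
  have hS' : ‖S (x n) - S (x (n + 1))‖ ≤ β n * ‖x n - S (x n)‖ :=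
    calc ‖S (x n) - S (x (n + 1))‖ ≤ ‖x (n + 1) - x n‖ := by
          simpa [norm_sub_rev (x n)] using hS.norm_sub_le (hxC n) (hxC (n + 1))
      _ = β n * ‖x n - S (x n)‖ := by
          rw [hstep, norm_smul, Real.norm_of_nonneg hβ0, norm_sub_rev]
  calc ‖x (n + 1) - S (x (n + 1))‖
      ≤ ‖x (n + 1) - S (x n)‖ + ‖S (x n) - S (x (n + 1))‖ :=
        norm_sub_le_norm_sub_add_norm_sub _ _ _
    _ ≤ (1 - β n) * ‖x n - S (x n)‖ + β n * ‖x n - S (x n)‖ := by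
        rw [hrest, norm_smul, Real.norm_of_nonneg (sub_nonneg.2 hβ1)]
        gcongr
    _ = ‖x n - S (x n)‖ := by ring

theorem tendsto_norm_sub_map_zero (hx : IsKrasnoselskiiMannSeq S β x)
    (hS : LipschitzOnWith 1 S C) (hxC : ∀ n, x n ∈ C) (hβ : ∀ n, β n ∈ Icc (0 : ℝ) 1)
    (hβsum : Tendsto (fun N => ∑ n ∈ Finset.range N, β n * (1 - β n)) atTop atTop)
    {p : H} (hpC : p ∈ C) (hp : S p = p) :
    Tendsto (fun n => ‖x n - S (x n)‖) atTop (𝓝 0) := by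
  have hsum : ∀ N, ∑ n ∈ Finset.range N, β n * (1 - β n) * ‖x n - S (x n)‖ ^ 2
      ≤ ‖x 0 - p‖ ^ 2 := fun N =>
    calc ∑ n ∈ Finset.range N, β n * (1 - β n) * ‖x n - S (x n)‖ ^ 2
        ≤ ∑ n ∈ Finset.range N, (‖x n - p‖ ^ 2 - ‖x (n + 1) - p‖ ^ 2) :=
          Finset.sum_le_sum fun n _ => by linarith [hx.norm_sub_sq_succ_le hS hxC hβ hpC hp n]
      _ = ‖x 0 - p‖ ^ 2 - ‖x N - p‖ ^ 2 := Finset.sum_range_sub' (fun n => ‖x n - p‖ ^ 2) N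
      _ ≤ ‖x 0 - p‖ ^ 2 := sub_le_self _ (sq_nonneg _)
  have hsq := tendsto_zero_of_antitone_of_sum_mul_le
    (fun m n hmn => pow_le_pow_left₀ (norm_nonneg _) (hx.antitone_norm_sub_map hS hxC hβ hmn) 2)
    (fun n => sq_nonneg _) (fun n => mul_nonneg (hβ n).1 (sub_nonneg.2 (hβ n).2)) hβsum hsum
  simpa using hsq.sqrt

theorem exists_tendsto_norm_sub (hx : IsKrasnoselskiiMannSeq S β x) (hS : LipschitzOnWith 1 S C)
    (hxC : ∀ n, x n ∈ C) (hβ : ∀ n, β n ∈ Icc (0 : ℝ) 1) {p : H} (hpC : p ∈ C) (hp : S p = p) :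
    ∃ L, Tendsto (fun n => ‖x n - p‖) atTop (𝓝 L) :=
  ⟨_, tendsto_atTop_ciInf (hx.antitone_norm_sub hS hxC hβ hpC hp)
    ⟨0, fun _ ⟨_, h⟩ => h ▸ norm_nonneg _⟩⟩

end IsKrasnoselskiiMannSeq

theorem smul_add_one_sub_smul_eq_self_iff {k : ℝ} (hk : k ≠ 1) {y z : H} :
    k • y + (1 - k) • z = y ↔ z = y := by
  have hrw : k • y + (1 - k) • z - y = (1 - k) • (z - y) := by module
  rw [← sub_eq_zero, hrw, smul_eq_zero, sub_eq_zero, sub_eq_zero, or_iff_right (Ne.symm hk)]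

theorem isKrasnoselskiiMannSeq_of_mann {T : H → H} {k : ℝ} (hk : k ≠ 1) {α : ℕ → ℝ} {x : ℕ → H}
    (hx : ∀ n, x (n + 1) = α n • x n + (1 - α n) • T (x n)) :
    IsKrasnoselskiiMannSeq (fun y => k • y + (1 - k) • T y) (fun n => (1 - α n) / (1 - k)) x :=
  fun n => by
    have hk' : 1 - k ≠ 0 := sub_ne_zero.2 (Ne.symm hk)
    rw [hx n]
    match_scalars
    · field_simp; ring
    · field_simp

end

theorem mann_weak_convergence_strict_pseudocontraction
    {H : Type*} [NormedAddCommGroup H] [InnerProductSpace ℝ H] [CompleteSpace H]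
    (C : Set H) (hCb : Bornology.IsBounded C) (hCc : IsClosed C) (hC : Convex ℝ C)
    (T : H → H) (hT : Set.MapsTo T C C)
    (k : ℝ) (hk0 : 0 ≤ k) (hk1 : k < 1)
    (hspc : ∀ x ∈ C, ∀ y ∈ C,
      ‖T x - T y‖ ^ 2 ≤ ‖x - y‖ ^ 2 + k * ‖x - y - (T x - T y)‖ ^ 2)
    (hfix : ∃ p ∈ C, T p = p)
    (α : ℕ → ℝ) (hα : ∀ n, k < α n ∧ α n < 1)
    (hdiv : Tendsto (fun N => ∑ n ∈ Finset.range N, (α n - k) * (1 - α n)) atTop atTop)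
    (x : ℕ → H) (hx0 : x 0 ∈ C)
    (hit : ∀ n, x (n + 1) = α n • x n + (1 - α n) • T (x n)) :
    ∃ q ∈ C, T q = q ∧
      ∀ w : H, Tendsto (fun n => ⟪x n, w⟫) atTop (𝓝 ⟪q, w⟫) := by
  obtain ⟨p, hpC, hpT⟩ := hfix
  have hk : 0 < 1 - k := sub_pos.2 hk1
  set S : H → H := fun y => k • y + (1 - k) • T y
  have hS : LipschitzOnWith 1 S C :=
    lipschitzOnWith_one_averaged_of_strictPseudocontractive hk1.le hspc
  have hfixS : ∀ q, S q = q ↔ T q = q := fun q => smul_add_one_sub_smul_eq_self_iff hk1.ne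
  have hxKM := isKrasnoselskiiMannSeq_of_mann hk1.ne hit
  have hβ : ∀ n, (1 - α n) / (1 - k) ∈ Icc (0 : ℝ) 1 := fun n =>
    ⟨div_nonneg (by linarith [hα n]) hk.le, (div_le_one hk).2 (by linarith [hα n])⟩
  have hβsum : Tendsto (fun N => ∑ n ∈ Finset.range N,
      (1 - α n) / (1 - k) * (1 - (1 - α n) / (1 - k))) atTop atTop := by
    refine (hdiv.atTop_div_const (pow_pos hk 2)).congr fun N => ?_
    rw [Finset.sum_div]
    exact Finset.sum_congr rfl fun n _ => by field_simp; ring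
  have hxC : ∀ n, x n ∈ C := fun n => by
    induction n with
    | zero => exact hx0
    | succ n ih =>
      rw [hit n]
      exact hC ih (hT ih) (by linarith [hα n]) (by linarith [hα n]) (by ring)
  have hbdd : Bornology.IsBounded (range x) := hCb.subset (range_subset_iff.2 hxC)
  have hd := hxKM.tendsto_norm_sub_map_zero hS hxC hβ hβsum hpC ((hfixS p).2 hpT)
  obtain ⟨q, ⟨hqC, hTq⟩, hq⟩ := exists_weakTendsto_of_tendsto_norm_sub (F := {r ∈ C | T r = r})
    hbdd (fun r ⟨hrC, hTr⟩ => hxKM.exists_tendsto_norm_sub hS hxC hβ hrC ((hfixS r).2 hTr))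
    fun U r hU hr => by
      have hrC := hCc.mem_of_weakTendsto hC (.of_forall hxC) hr
      exact ⟨hrC, (hfixS r).1 (hS.eq_of_weakTendsto (.of_forall hxC) hbdd (hd.mono_left hU) hr hrC)⟩
  exact ⟨q, hqC, hTq, hq⟩
end

section
/- Let C be a closed convex subset of a Hilbert space H, U : C → C nonexpansive with Fix(U) ≠ ∅, and λ ∈ (0, 1). Then the mapping U_λ = λ I + (1 − λ) U maps C into C, satisfies Fix(U_λ) = Fix(U), and is asymptotically regular: for each x ∈ C, ‖U_λ^{n+1} x − U_λ^n x‖ → 0 as n → ∞. -/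
open Filter
open scoped Topology

/-!
Write `T = λ I + (1 - λ) U` and fix `p ∈ Fix U`. In a Hilbert space the identity
`‖λ u + (1 - λ) v‖² = λ‖u‖² + (1 - λ)‖v‖² - λ(1 - λ)‖u - v‖²`, applied to `u = x - p`,
`v = U x - p`, gives the Fejér inequality
`(1 - λ)‖T x - p‖² + λ‖T x - x‖² ≤ (1 - λ)‖x - p‖²`.
Along the orbit `Tⁿ x` the terms `λ‖Tⁿ⁺¹ x - Tⁿ x‖²` therefore telescope to a sum bounded by
`(1 - λ)‖x - p‖²`, so they are summable and tend to `0`.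
-/

theorem summable_of_add_le_of_nonneg {f g : ℕ → ℝ} (hf : ∀ n, 0 ≤ f n) (hg : ∀ n, 0 ≤ g n)
    (h : ∀ n, f (n + 1) + g n ≤ f n) : Summable g := by
  refine summable_of_sum_range_le hg (c := f 0) fun n => ?_
  calc ∑ k ∈ Finset.range n, g k ≤ ∑ k ∈ Finset.range n, (f k - f (k + 1)) :=
        Finset.sum_le_sum fun k _ => by linarith [h k]
    _ = f 0 - f n := Finset.sum_range_sub' f n
    _ ≤ f 0 := by linarith [hf n]

theorem norm_smul_add_one_sub_smul_sq_s17 {E : Type*} [NormedAddCommGroup E] [InnerProductSpace ℝ E]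
    (a : ℝ) (u v : E) :
    ‖a • u + (1 - a) • v‖ ^ 2 = a * ‖u‖ ^ 2 + (1 - a) * ‖v‖ ^ 2 - a * (1 - a) * ‖u - v‖ ^ 2 := by
  simp only [← real_inner_self_eq_norm_sq, inner_add_left, inner_add_right, inner_sub_left,
    inner_sub_right, real_inner_smul_left, real_inner_smul_right, real_inner_comm v u]
  ring

section averagedMap

variable {E : Type*}

def averagedMap [AddCommGroup E] [Module ℝ E] (a : ℝ) (U : E → E) (x : E) : E :=
  a • x + (1 - a) • U x

section Module

variable [AddCommGroup E] [Module ℝ E] {a : ℝ} {U : E → E}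

theorem averagedMap_sub_self (a : ℝ) (U : E → E) (x : E) :
    averagedMap a U x - x = (1 - a) • (U x - x) := by
  unfold averagedMap; module

theorem averagedMap_eq_self_iff (ha : a ≠ 1) {x : E} : averagedMap a U x = x ↔ U x = x := by
  rw [← sub_eq_zero, averagedMap_sub_self, smul_eq_zero, sub_eq_zero, sub_eq_zero,
    or_iff_right ha.symm]

theorem mapsTo_averagedMap {C : Set E} (hC : Convex ℝ C) (hU : Set.MapsTo U C C)
    (ha₀ : 0 ≤ a) (ha₁ : a ≤ 1) : Set.MapsTo (averagedMap a U) C C :=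
  fun _ hx => hC hx (hU hx) ha₀ (sub_nonneg.2 ha₁) (add_sub_cancel a 1)

end Module

variable [NormedAddCommGroup E] [InnerProductSpace ℝ E] {a : ℝ} {U : E → E}

theorem averagedMap_fejer {x p : E} (hx : ‖U x - p‖ ≤ ‖x - p‖) (ha₁ : a ≤ 1) :
    (1 - a) * ‖averagedMap a U x - p‖ ^ 2 + a * ‖averagedMap a U x - x‖ ^ 2
      ≤ (1 - a) * ‖x - p‖ ^ 2 := by
  have hsplit : averagedMap a U x - p = a • (x - p) + (1 - a) • (U x - p) := by
    unfold averagedMap; module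
  have hsq_le : ‖U x - p‖ ^ 2 ≤ ‖x - p‖ ^ 2 := pow_le_pow_left₀ (norm_nonneg _) hx 2
  have hstep : ‖averagedMap a U x - x‖ = (1 - a) * ‖x - U x‖ := by
    rw [averagedMap_sub_self, norm_smul, Real.norm_of_nonneg (sub_nonneg.2 ha₁), norm_sub_rev]
  rw [hsplit, norm_smul_add_one_sub_smul_sq_s17, hstep, sub_sub_sub_cancel_right]
  nlinarith [mul_le_mul_of_nonneg_left hsq_le (mul_nonneg (sub_nonneg.2 ha₁) (sub_nonneg.2 ha₁))]

theorem tendsto_norm_iterate_succ_averagedMap_sub {C : Set E} {p : E}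
    (hC : Set.MapsTo (averagedMap a U) C C) (hp : ∀ y ∈ C, ‖U y - p‖ ≤ ‖y - p‖)
    (ha₀ : 0 < a) (ha₁ : a ≤ 1) {x : E} (hx : x ∈ C) :
    Tendsto (fun n => ‖(averagedMap a U)^[n + 1] x - (averagedMap a U)^[n] x‖) atTop (𝓝 0) := by
  set T := averagedMap a U
  have hsummable : Summable fun n => a * ‖T^[n + 1] x - T^[n] x‖ ^ 2 := by
    refine summable_of_add_le_of_nonneg (f := fun n => (1 - a) * ‖T^[n] x - p‖ ^ 2)
      (fun n => mul_nonneg (sub_nonneg.2 ha₁) (sq_nonneg _)) (fun n => by positivity) fun n => ?_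
    rw [Function.iterate_succ_apply']
    exact averagedMap_fejer (hp _ (hC.iterate n hx)) ha₁
  have hsq := ((summable_mul_left_iff ha₀.ne').1 hsummable).tendsto_atTop_zero
  simpa [Real.sqrt_sq (norm_nonneg _)] using hsq.sqrt

end averagedMap

theorem averaged_nonexpansive_asymptotically_regular_general
    {H : Type*} [NormedAddCommGroup H] [InnerProductSpace ℝ H]
    (C : Set H) (hC : Convex ℝ C)
    (U : H → H) (hU : Set.MapsTo U C C)
    (hne : ∀ x ∈ C, ∀ y ∈ C, ‖U x - U y‖ ≤ ‖x - y‖)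
    (hfix : ∃ p ∈ C, U p = p)
    (lam : ℝ) (hl0 : 0 < lam) (hl1 : lam < 1)
    (Ul : H → H) (hUl : ∀ x, Ul x = lam • x + (1 - lam) • U x) :
    Set.MapsTo Ul C C ∧
      (∀ x ∈ C, (Ul x = x ↔ U x = x)) ∧
      (∀ x ∈ C, Tendsto (fun n => ‖Ul^[n + 1] x - Ul^[n] x‖) atTop (𝓝 0)) := by
  obtain rfl : Ul = averagedMap lam U := funext hUl
  obtain ⟨p, hpC, hp⟩ := hfix
  have hmaps := mapsTo_averagedMap hC hU hl0.le hl1.le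
  have hquasi : ∀ y ∈ C, ‖U y - p‖ ≤ ‖y - p‖ := fun y hy => by simpa [hp] using hne y hy p hpC
  exact ⟨hmaps, fun _ _ => averagedMap_eq_self_iff hl1.ne,
    fun _ hx => tendsto_norm_iterate_succ_averagedMap_sub hmaps hquasi hl0 hl1.le hx⟩

theorem averaged_nonexpansive_asymptotically_regular
    {H : Type*} [NormedAddCommGroup H] [InnerProductSpace ℝ H] [CompleteSpace H]
    (C : Set H) (hCc : IsClosed C) (hC : Convex ℝ C)
    (U : H → H) (hU : Set.MapsTo U C C)
    (hne : ∀ x ∈ C, ∀ y ∈ C, ‖U x - U y‖ ≤ ‖x - y‖)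
    (hfix : ∃ p ∈ C, U p = p)
    (lam : ℝ) (hl0 : 0 < lam) (hl1 : lam < 1)
    (Ul : H → H) (hUl : ∀ x, Ul x = lam • x + (1 - lam) • U x) :
    Set.MapsTo Ul C C ∧
      (∀ x ∈ C, (Ul x = x ↔ U x = x)) ∧
      (∀ x ∈ C, Tendsto (fun n => ‖Ul^[n + 1] x - Ul^[n] x‖) atTop (𝓝 0)) :=
  averaged_nonexpansive_asymptotically_regular_general C hC U hU hne hfix lam hl0 hl1 Ul hUl
end
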